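/- Let p be a point in a face f and let (a,d) be a port candidate with a on the boundary of f. For any two points p, q in f that can be joined by an orthogonal polyline inside f with at most b bends, the bend distances satisfy |bdist(p,(a,d)) - bdist(q,(a,d))| ≤ b + 1. -/

import Mathlib

/-- A point in the plane. -/
abbrev Pt := ℝ × ℝ

/-- Two points span an axis-parallel (horizontal or vertical) segment. -/
def AxisParallel (a b : Pt) : Prop := a.1 = b.1 ∨ a.2 = b.2

/-- An orthogonal polyline inside the region `f`: a list of at least two points whose
consecutive segments are axis-parallel and contained in `f`. -/
def IsOrthoPolyline (f : Set Pt) (l : List Pt) : Prop :=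
  2 ≤ l.length ∧ l.Chain' (fun a b => AxisParallel a b ∧ segment ℝ a b ⊆ f)

/-- `PolyFrom f p q l`: `l` is an orthogonal polyline inside `f` from `p` to `q`. -/
def PolyFrom (f : Set Pt) (p q : Pt) (l : List Pt) : Prop :=
  IsOrthoPolyline f l ∧ l.head? = some p ∧ l.getLast? = some q

/-- The four axis directions. -/
inductive Dir | up | down | left | right
deriving DecidableEq

/-- The unit vector of a direction. -/
def Dir.vec : Dir → Pt
  | .up => (0, 1)
  | .down => (0, -1)
  | .left => (-1, 0)
  | .right => (1, 0)

/-- The polyline `l` arrives at its final point from direction `d`: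
its last segment travels in direction `d`. -/
def ArrivesFrom (d : Dir) (l : List Pt) : Prop :=
  ∃ x a : Pt, [x, a] <:+ l ∧ ∃ t : ℝ, 0 < t ∧ a - x = t • d.vec

/-- The bend distance from a point `p` inside a face `f` to a port candidate `(a, d)`:
the minimum number of bends of an orthogonal polyline inside `f` from `p` to `a` arriving
at `a` from direction `d`.  (A polyline on `m` points has `m - 2` bends; collinear
consecutive segments can always be merged, so the minimum is unaffected.) -/
noncomputable def bdist (f : Set Pt) (p a : Pt) (d : Dir) : ℕ :=
  sInf {b | ∃ l, PolyFrom f p a l ∧ ArrivesFrom d l ∧ l.length - 2 = b}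

/-- `F` is a histogram over the horizontal baseline `δ` from `(x₁, y₀)` to `(x₂, y₀)`:
the baseline is a segment on (the boundary of) `F`, and every point of `F` is reachable by a
vertical ray starting at the baseline and orthogonal to it. -/
def IsHistogram (F : Set Pt) (y₀ x₁ x₂ : ℝ) : Prop :=
  segment ℝ ((x₁, y₀) : Pt) ((x₂, y₀) : Pt) ⊆ F ∧
  ∀ p ∈ F, ((p.1, y₀) : Pt) ∈ segment ℝ ((x₁, y₀) : Pt) ((x₂, y₀) : Pt) ∧
    segment ℝ ((p.1, y₀) : Pt) p ⊆ F

/-!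
Prepending a polyline from `p` to `q` with `m` points (hence `m - 2` bends) to an optimal route
from `q` to the port yields a route from `p` with at most `m - 1` more bends, the extra one
possibly at `q`; reversing the polyline gives the other inequality. When `q` has no route at all,
neither has `p`, and both bend distances are the junk value `sInf ∅ = 0`.
-/

section Polyline

variable {f : Set Pt} {p q r : Pt} {l l' : List Pt}

theorem PolyFrom.two_le_length (h : PolyFrom f p q l) : 2 ≤ l.length := h.1.1

theorem PolyFrom.reverse (h : PolyFrom f p q l) : PolyFrom f q p l.reverse := by
  obtain ⟨⟨hlen, hchain⟩, hhead, hlast⟩ := h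
  refine ⟨⟨by simpa using hlen, ?_⟩, by rwa [List.head?_reverse], by rwa [List.getLast?_reverse]⟩
  refine List.isChain_reverse.2 (hchain.imp fun x y ⟨hxy, hseg⟩ => ?_)
  exact ⟨hxy.imp Eq.symm Eq.symm, by rwa [segment_symm]⟩

theorem PolyFrom.append (h : PolyFrom f p q l) (h' : PolyFrom f q r l') :
    PolyFrom f p r (l.dropLast ++ l') := by
  obtain ⟨⟨hlen, hchain⟩, hhead, hlast⟩ := h
  obtain ⟨⟨hlen', hchain'⟩, hhead', hlast'⟩ := h'
  obtain ⟨q', t, rfl⟩ := List.exists_cons_of_ne_nil (List.ne_nil_of_length_pos (by omega) : l' ≠ [])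
  obtain rfl : q' = q := by simpa using hhead'
  have hne : l ≠ [] := List.ne_nil_of_length_pos (by omega)
  have hjoin : l.dropLast ++ q' :: t = l ++ t := by
    rw [List.getLast?_eq_some_getLast hne, Option.some_inj] at hlast
    conv_rhs => rw [← List.dropLast_append_getLast hne, hlast]
    simp
  refine ⟨⟨by simp; omega, ?_⟩, ?_, ?_⟩
  · rw [hjoin]
    refine List.IsChain.append hchain hchain'.tail fun x hx y hy => ?_
    obtain rfl : x = q' := by simpa [hlast] using hx.symm
    exact List.isChain_cons.1 hchain' |>.1 y hy
  · rw [hjoin, List.head?_append_of_ne_nil _ hne, hhead]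
  · rwa [List.getLast?_append_of_ne_nil _ (List.cons_ne_nil _ _)]

end Polyline

theorem ArrivesFrom.of_suffix {d : Dir} {l l' : List Pt} (h : ArrivesFrom d l) (hs : l <:+ l') :
    ArrivesFrom d l' := by
  obtain ⟨x, a, hxa, hdir⟩ := h
  exact ⟨x, a, hxa.trans hs, hdir⟩

section BendDistance

variable {f : Set Pt} {p q a : Pt} {d : Dir} {m l : List Pt}

theorem exists_route_of_polyFrom (hm : PolyFrom f p q m) (hl : PolyFrom f q a l)
    (hd : ArrivesFrom d l) :
    ∃ l', PolyFrom f p a l' ∧ ArrivesFrom d l' ∧ l'.length - 2 = m.length - 1 + (l.length - 2) :=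
  ⟨m.dropLast ++ l, hm.append hl, hd.of_suffix (List.suffix_append _ _), by
    have := hm.two_le_length; have := hl.two_le_length
    simp only [List.length_append, List.length_dropLast]; omega⟩

theorem bdist_le_bdist_add (hm : PolyFrom f p q m) :
    bdist f p a d ≤ bdist f q a d + (m.length - 1) := by
  rcases Set.eq_empty_or_nonempty
      {b | ∃ l, PolyFrom f q a l ∧ ArrivesFrom d l ∧ l.length - 2 = b} with hq | hq
  · have hp : {b | ∃ l, PolyFrom f p a l ∧ ArrivesFrom d l ∧ l.length - 2 = b} = ∅ := by
      refine Set.eq_empty_of_forall_notMem fun _ ⟨l, hl, hd, _⟩ => ?_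
      obtain ⟨l', hl', hd', -⟩ := exists_route_of_polyFrom hm.reverse hl hd
      exact hq.subset ⟨l', hl', hd', rfl⟩
    simp [bdist, hp]
  · obtain ⟨l, hl, hd, hlen⟩ := Nat.sInf_mem hq
    obtain ⟨l', hl', hd', hlen'⟩ := exists_route_of_polyFrom hm hl hd
    calc bdist f p a d ≤ l'.length - 2 := Nat.sInf_le ⟨l', hl', hd', rfl⟩
      _ = bdist f q a d + (m.length - 1) := by rw [hlen', bdist, ← hlen]; omega

end BendDistance

theorem stmt_1_general (f : Set Pt) (a : Pt) (d : Dir) (p q : Pt)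
    (b : ℕ)
    (hpoly : ∃ l, PolyFrom f p q l ∧ l.length - 2 ≤ b) :
    |(bdist f p a d : ℤ) - (bdist f q a d : ℤ)| ≤ b + 1 := by
  obtain ⟨m, hm, hmb⟩ := hpoly
  have hpq := bdist_le_bdist_add (a := a) (d := d) hm
  have hqp := bdist_le_bdist_add (a := a) (d := d) hm.reverse
  rw [List.length_reverse] at hqp
  have := hm.two_le_length
  rw [abs_sub_le_iff]
  omega

/-- Let `f` be a face (an orthogonal region) and `(a, d)` a port candidate with `a` on the
boundary of `f`.  For any two points `p, q ∈ f` that can be joined by an orthogonal polyline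
inside `f` with at most `b` bends, the bend distances satisfy
`|bdist(p,(a,d)) - bdist(q,(a,d))| ≤ b + 1`. -/
theorem stmt_1 (f : Set Pt) (a : Pt) (d : Dir) (p q : Pt)
    (hp : p ∈ f) (hq : q ∈ f) (b : ℕ)
    (hpoly : ∃ l, PolyFrom f p q l ∧ l.length - 2 ≤ b) :
    |(bdist f p a d : ℤ) - (bdist f q a d : ℤ)| ≤ b + 1 :=
  stmt_1_general f a d p q b hpoly
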